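/- Let n ≥ 2, let A be the n×n tridiagonal matrix with A_{1,1} = A_{n,n} = 1, A_{i,i} = 2 for 1 < i < n, A_{i,i+1} = A_{i+1,i} = -1, and all other entries 0, and let α > 0. With p = 1 + α/2 + √(α + α²/4) and q = 1 + α/2 - √(α + α²/4), the determinant satisfies det(α I_n + A) = [ (α + α²/2)(p^{n-1} - q^{n-1}) + α·√(α + α²/4)·(p^{n-1} + q^{n-1}) ] / ( 2·√(α + α²/4) ). -/
import Mathlib


open Matrix

/-- The `n × n` tridiagonal matrix with `A 1 1 = A n n = 1`, diagonal `2` otherwise,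
off-diagonal entries `-1`, and all other entries `0` (0-indexed in Lean). -/
noncomputable def triA (n : ℕ) : Matrix (Fin n) (Fin n) ℝ :=
  Matrix.of fun i j =>
    if i = j then (if (i : ℕ) = 0 ∨ (i : ℕ) = n - 1 then 1 else 2)
    else if (i : ℕ) + 1 = (j : ℕ) ∨ (j : ℕ) + 1 = (i : ℕ) then -1 else 0

/-- general tridiagonal matrix with diagonal `d` and off-diagonal `-1`. -/
noncomputable def T (d : ℕ → ℝ) (n : ℕ) : Matrix (Fin n) (Fin n) ℝ :=
  Matrix.of fun i j =>
    if (i : ℕ) = (j : ℕ) then d i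
    else if (i : ℕ) + 1 = (j : ℕ) ∨ (j : ℕ) + 1 = (i : ℕ) then -1 else 0

lemma T_apply (d : ℕ → ℝ) (n : ℕ) (i j : Fin n) :
    T d n i j = if (i : ℕ) = (j : ℕ) then d i
      else if (i : ℕ) + 1 = (j : ℕ) ∨ (j : ℕ) + 1 = (i : ℕ) then -1 else 0 := rfl

lemma T_congr (d d' : ℕ → ℝ) (n : ℕ) (h : ∀ i < n, d i = d' i) : T d n = T d' n := by
  ext i j
  rw [T_apply, T_apply]
  split_ifs with h1 h2
  · exact h i i.isLt
  · rfl
  · rfl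

lemma T_det_rec (d : ℕ → ℝ) (n : ℕ) :
    (T d (n+2)).det = d 0 * (T (fun k => d (k+1)) (n+1)).det
      - (T (fun k => d (k+2)) n).det := by
  rw [Matrix.det_succ_row_zero, Fin.sum_univ_succ, Fin.sum_univ_succ]
  have htail : ∀ j : Fin n, T d (n+2) 0 j.succ.succ = 0 := by
    intro j; rw [T_apply]; simp [Fin.val_succ]
  simp only [htail, mul_zero, zero_mul, Finset.sum_const_zero, add_zero]
  have h00 : T d (n+2) 0 0 = d 0 := by rw [T_apply]; simp
  have h01 : T d (n+2) 0 (Fin.succ 0) = -1 := by rw [T_apply]; simp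
  rw [h00, h01]
  have hsub0 : (T d (n+2)).submatrix Fin.succ ((0 : Fin (n+2)).succAbove)
      = T (fun k => d (k+1)) (n+1) := by
    ext i j
    simp only [Matrix.submatrix_apply, Fin.succAbove_zero, T_apply, Fin.val_succ]
    split_ifs <;> first | rfl | omega
  rw [hsub0]
  have hcoord0 : (((Fin.succ 0 : Fin (n+2)).succAbove 0 : ℕ)) = 0 := by
    simp [Fin.succAbove, Fin.lt_def]
  have hcoordS : ∀ j : Fin n, (((Fin.succ 0 : Fin (n+2)).succAbove j.succ : ℕ)) = (j:ℕ) + 2 := by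
    intro j
    simp only [Fin.succAbove, Fin.lt_def, Fin.coe_castSucc, Fin.val_succ]
    split_ifs <;> simp_all
  set B := (T d (n+2)).submatrix Fin.succ ((Fin.succ 0 : Fin (n+2)).succAbove) with hB
  have hBdet : B.det = - (T (fun k => d (k+2)) n).det := by
    rw [Matrix.det_succ_column_zero, Fin.sum_univ_succ]
    have htail2 : ∀ i : Fin n, B i.succ 0 = 0 := by
      intro i
      rw [hB, Matrix.submatrix_apply, T_apply]
      simp only [Fin.val_succ, hcoord0]
      split_ifs <;> (try simp only [false_or, or_false] at *) <;>
        first | rfl | omega | exact (‹False›).elim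
    simp only [htail2, mul_zero, zero_mul, Finset.sum_const_zero, add_zero]
    have hB00 : B 0 0 = -1 := by
      rw [hB, Matrix.submatrix_apply, T_apply]
      simp only [Fin.val_succ, hcoord0, Fin.val_zero]
      norm_num
    rw [hB00]
    have hsub : B.submatrix ((0 : Fin (n+1)).succAbove) Fin.succ
        = T (fun k => d (k+2)) n := by
      ext i j
      rw [Matrix.submatrix_apply, Fin.succAbove_zero, hB, Matrix.submatrix_apply, T_apply, T_apply]
      simp only [Fin.val_succ, hcoordS]
      split_ifs <;> (try simp only [false_or, or_false] at *) <;>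
        first | rfl | omega | exact (‹False›).elim
    rw [hsub]
    norm_num
  rw [hBdet]
  norm_num
  ring

/-- recurrence sequence for determinants of tridiagonal matrices whose last
diagonal entry is `α+1` and the others `α+2`. -/
noncomputable def ee (α : ℝ) : ℕ → ℝ
  | 0 => 1
  | 1 => α + 1
  | m+2 => (α+2) * ee α (m+1) - ee α m

lemma edet (α : ℝ) :
    ∀ m : ℕ, (T (fun i => if i = m - 1 then α+1 else α+2) m).det = ee α m := by
  intro m
  induction m using Nat.twoStepInduction with
  | zero => rw [Matrix.det_fin_zero]; rfl
  | one => rw [Matrix.det_fin_one, T_apply]; norm_num [ee]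
  | more m ih ih1 =>
    rw [T_det_rec]
    have e1 : T (fun k => (if (k+1 : ℕ) = m + 2 - 1 then α+1 else α+2)) (m+1)
        = T (fun i => if i = (m+1) - 1 then α+1 else α+2) (m+1) := by
      apply T_congr; intro i hi; split_ifs <;> first | rfl | omega
    have e2 : T (fun k => (if (k+2 : ℕ) = m + 2 - 1 then α+1 else α+2)) m
        = T (fun i => if i = m - 1 then α+1 else α+2) m := by
      apply T_congr; intro i hi; split_ifs <;> first | rfl | omega
    rw [e1, e2, ih1, ih]
    have h0 : (if (0:ℕ) = m + 2 - 1 then α+1 else α+2) = α + 2 := by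
      split_ifs <;> first | rfl | omega
    rw [h0]
    rfl

lemma ee_closed (α s : ℝ) (hs0 : s ≠ 0) (hs2 : s^2 = α + α^2/4) :
    ∀ m, ee α m = (((1+α/2+s)-1)*(1+α/2+s)^m - ((1+α/2-s)-1)*(1+α/2-s)^m)/(2*s) := by
  intro m
  induction m using Nat.twoStepInduction with
  | zero => show (1:ℝ) = _; rw [pow_zero, pow_zero]; field_simp; ring
  | one => show (α+1:ℝ) = _; rw [pow_one, pow_one]; field_simp; ring
  | more m ih ih1 =>
    rw [show ee α (m+2) = (α+2) * ee α (m+1) - ee α m from rfl, ih1, ih]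
    linear_combination (-((((1+α/2+s)-1)*(1+α/2+s)^m - ((1+α/2-s)-1)*(1+α/2-s)^m))/(2*s)) * hs2

lemma matrix_eq (α : ℝ) (n : ℕ) :
    α • (1 : Matrix (Fin n) (Fin n) ℝ) + triA n
      = T (fun i => if i = 0 ∨ i = n - 1 then α+1 else α+2) n := by
  ext i j
  simp only [Matrix.add_apply, Matrix.smul_apply, Matrix.one_apply, triA,
    Matrix.of_apply, T_apply, smul_eq_mul]
  rcases eq_or_ne i j with h | h
  · subst h
    simp only [if_pos rfl]
    split_ifs <;> ring
  · have hv : ¬ (i:ℕ) = (j:ℕ) := fun hh => h (Fin.ext hh)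
    rw [if_neg h, if_neg hv, if_neg h]
    ring

/-- closed-form determinant of `α I + A`. -/
theorem stmt_1 (n : ℕ) (hn : 2 ≤ n) (α : ℝ) (hα : 0 < α)
    (s p q : ℝ) (hs : s = Real.sqrt (α + α ^ 2 / 4))
    (hp : p = 1 + α / 2 + s) (hq : q = 1 + α / 2 - s) :
    (α • (1 : Matrix (Fin n) (Fin n) ℝ) + triA n).det =
      ((α + α ^ 2 / 2) * (p ^ (n - 1) - q ^ (n - 1))
        + α * s * (p ^ (n - 1) + q ^ (n - 1))) / (2 * s) := by
  have hS : (0:ℝ) < α + α ^ 2 / 4 := by positivity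
  have hspos : 0 < s := by rw [hs]; exact Real.sqrt_pos.mpr hS
  have hs0 : s ≠ 0 := ne_of_gt hspos
  have hs2 : s ^ 2 = α + α ^ 2 / 4 := by rw [hs, Real.sq_sqrt hS.le]
  obtain ⟨m, rfl⟩ : ∃ m, n = m + 2 := ⟨n - 2, by omega⟩
  subst hp hq
  rw [matrix_eq]
  have hd : (T (fun i => if i = 0 ∨ i = (m+2) - 1 then α+1 else α+2) (m+2)).det
      = (α+1) * ee α (m+1) - ee α m := by
    rw [T_det_rec]
    simp only [show m + 2 - 1 = m + 1 from rfl]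
    have e1 : T (fun k => (if (k+1 : ℕ) = 0 ∨ (k+1 : ℕ) = m+1 then α+1 else α+2)) (m+1)
        = T (fun i => if i = (m+1) - 1 then α+1 else α+2) (m+1) := by
      apply T_congr; intro i hi
      have h : ((i+1 : ℕ) = 0 ∨ (i+1:ℕ) = m+1) ↔ (i = (m+1) - 1) := by omega
      rw [if_congr h rfl rfl]
    have e2 : T (fun k => (if (k+2 : ℕ) = 0 ∨ (k+2 : ℕ) = m+1 then α+1 else α+2)) m
        = T (fun i => if i = m - 1 then α+1 else α+2) m := by
      apply T_congr; intro i hi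
      have h : ((i+2 : ℕ) = 0 ∨ (i+2:ℕ) = m+1) ↔ (i = m - 1) := by omega
      rw [if_congr h rfl rfl]
    rw [e1, e2, edet α (m+1), edet α m]
    norm_num
  rw [hd, ee_closed α s hs0 hs2 (m+1), ee_closed α s hs0 hs2 m]
  have hexp : m + 2 - 1 = m + 1 := rfl
  rw [hexp]
  linear_combination (((1+α/2+s)^m - (1+α/2-s)^m)/(2*s)) * hs2
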